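/- Let H be a finite simple graph with weight functions w, s : V(H) → ℕ satisfying w(v) ≤ s(v) for all v, let {V_1,...,V_t} be its type partition and H' its type graph. Define, for each class x: w'(x) = min_{v∈V_x}( w(v) + Σ_{u∈V_x, u≠v} s(u) ) if V_x induces a clique, and w'(x) = Σ_{u∈V_x} w(u) otherwise; and s'(x) = Σ_{u∈V_x} s(u). If C' is a vertex cover of H', then the set C ⊆ V(H) consisting of all of V_x for every x ∈ C', together with V_x \ {v_x} for every clique class x ∉ C' (where v_x is a vertex of V_x maximizing s(u) − w(u)), is a vertex cover of H and satisfies Σ_{v∈C} s(v) + Σ_{v∉C} w(v) = Σ_{x∈C'} s'(x) + Σ_{x∉C'} w'(x). -/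

import Mathlib

open scoped Classical

open scoped Classical

/-- Two vertices have the same type iff `N(v) \ {u} = N(u) \ {v}`. -/
def sameType {V : Type*} (G : SimpleGraph V) (u v : V) : Prop :=
  G.neighborSet v \ {u} = G.neighborSet u \ {v}

theorem sameType_equivalence {V : Type*} (G : SimpleGraph V) : Equivalence (sameType G) := by
  constructor
  · intro u; rfl
  · intro u v h; exact h.symm
  · intro u v w h1 h2
    have h1' : ∀ x : V, (G.Adj v x ∧ x ≠ u) ↔ (G.Adj u x ∧ x ≠ v) := by
      intro x
      have := Set.ext_iff.mp h1 x
      simpa [Set.mem_diff, SimpleGraph.mem_neighborSet, Set.mem_singleton_iff] using this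
    have h2' : ∀ x : V, (G.Adj w x ∧ x ≠ v) ↔ (G.Adj v x ∧ x ≠ w) := by
      intro x
      have := Set.ext_iff.mp h2 x
      simpa [Set.mem_diff, SimpleGraph.mem_neighborSet, Set.mem_singleton_iff] using this
    ext x
    simp only [Set.mem_diff, SimpleGraph.mem_neighborSet, Set.mem_singleton_iff]
    by_cases hxv : x = v
    · subst hxv
      by_cases huw : w = u
      · subst huw; tauto
      · constructor
        · rintro ⟨hadj, hxu⟩
          have h3 : G.Adj u w ∧ w ≠ x := (h1' w).mp ⟨hadj.symm, huw⟩
          have h5 : G.Adj x u ∧ u ≠ w := (h2' u).mp ⟨h3.1.symm, Ne.symm hxu⟩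
          exact ⟨h5.1.symm, hadj.ne'⟩
        · rintro ⟨hadj, hxw⟩
          have h5 : G.Adj w u ∧ u ≠ x := (h2' u).mpr ⟨hadj.symm, Ne.symm huw⟩
          have h3 : G.Adj x w ∧ w ≠ u := (h1' w).mpr ⟨h5.1.symm, Ne.symm hxw⟩
          exact ⟨h3.1.symm, Ne.symm h5.2⟩
    · constructor
      · rintro ⟨hadj, hxu⟩
        have t1 := (h2' x).mp ⟨hadj, hxv⟩
        have t2 := (h1' x).mp ⟨t1.1, hxu⟩
        exact ⟨t2.1, t1.2⟩
      · rintro ⟨hadj, hxw⟩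
        have t1 := (h1' x).mpr ⟨hadj, hxv⟩
        have t2 := (h2' x).mpr ⟨t1.1, hxw⟩
        exact ⟨t2.1, t1.2⟩

/-- The setoid of the same-type relation. -/
def typeSetoid {V : Type*} (G : SimpleGraph V) : Setoid V :=
  ⟨sameType G, sameType_equivalence G⟩

/-- The class of the type partition corresponding to a vertex of the type graph. -/
def typeClass {V : Type*} (G : SimpleGraph V) (x : Quotient (typeSetoid G)) : Set V :=
  {v | Quotient.mk (typeSetoid G) v = x}

/-- The type graph: one vertex per class of the type partition, two distinct classes
being adjacent iff every vertex of one is adjacent to every vertex of the other. -/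
def typeGraph {V : Type*} (G : SimpleGraph V) : SimpleGraph (Quotient (typeSetoid G)) where
  Adj x y := x ≠ y ∧ ∀ u v : V,
    Quotient.mk (typeSetoid G) u = x → Quotient.mk (typeSetoid G) v = y → G.Adj u v
  symm := by
    constructor
    rintro x y ⟨hxy, h⟩
    exact ⟨hxy.symm, fun u v hu hv => (h v u hv hu).symm⟩
  loopless := by constructor; rintro x ⟨hxx, -⟩; exact hxx rfl

/-- A base graph is one whose type partition consists only of singletons. -/
def IsBaseGraph {V : Type*} (G : SimpleGraph V) : Prop :=
  ∀ u v : V, sameType G u v → u = v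

noncomputable def itpAux : (n : ℕ) → (V : Type u) → SimpleGraph V → ℕ
  | 0, V, _ => Nat.card V
  | n + 1, V, G => if IsBaseGraph G then Nat.card V else itpAux n _ (typeGraph G)

/-- The iterated type partition number: the number of vertices of the first base graph
in the sequence `H⁰ = G`, `Hⁱ = typeGraph Hⁱ⁻¹`. -/
noncomputable def itp {V : Type u} (G : SimpleGraph V) : ℕ :=
  itpAux (Nat.card V) V G

/-- The neighborhood diversity: the number of classes of the type partition. -/
noncomputable def nd {V : Type*} (G : SimpleGraph V) : ℕ :=
  Nat.card (Quotient (typeSetoid G))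

/-- A vertex cover: a set of vertices meeting every edge. -/
def IsVertexCover {V : Type*} (G : SimpleGraph V) (C : Set V) : Prop :=
  ∀ ⦃u v⦄, G.Adj u v → u ∈ C ∨ v ∈ C

/-- The cost of a candidate vertex cover `C` with respect to the weights `w ≤ s`:
`Σ_{v ∈ C} s v + Σ_{v ∉ C} w v`. -/
noncomputable def vcCost {V : Type*} (w s : V → ℕ) (C : Set V) : ℕ :=
  (∑ᶠ v ∈ C, s v) + ∑ᶠ v ∈ Cᶜ, w v

/-!
Vertices of the same type have the same neighbours apart from each other. Hence an edge inside
a class makes that class a clique, and an edge between two classes makes them completely joined,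
i.e. adjacent in the type graph; so the lifted set covers every edge of `H`. The cost splits over
the classes: a class in `C'` contributes `s'`, an independent class outside `C'` its total `w`,
and a clique class outside `C'`, missing only `v_x`, contributes
`w v_x + ∑_{u ≠ v_x} s u = ∑ s - (s v_x - w v_x)`, which is the minimum defining `w'` because
`v_x` maximizes `s - w`.
-/

section Finsum

variable {α : Type*}

theorem vcCost_eq_sum_ite [Fintype α] (w s : α → ℕ) (A : Set α) :
    vcCost w s A = ∑ v, if v ∈ A then s v else w v := by
  rw [vcCost, finsum_mem_def, finsum_mem_def, finsum_eq_sum_of_fintype,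
    finsum_eq_sum_of_fintype, ← Finset.sum_add_distrib]
  refine Finset.sum_congr rfl fun v _ => ?_
  by_cases hv : v ∈ A <;> simp [hv]

theorem sum_eq_sum_finsum_mem_fiber {β : Type*} [Fintype α] [Fintype β] {M : Type*}
    [AddCommMonoid M] (π : α → β) (g : α → M) :
    ∑ a, g a = ∑ b, ∑ᶠ a ∈ π ⁻¹' {b}, g a := by
  rw [← Finset.sum_fiberwise Finset.univ π g]
  refine Finset.sum_congr rfl fun b _ => ?_
  rw [finsum_mem_eq_toFinset_sum]
  exact Finset.sum_congr (by ext; simp) fun _ _ => rfl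

theorem add_finsum_mem_sdiff_singleton {M : Type*} [AddCommMonoid M] {S : Set α}
    (hS : S.Finite) (g : α → M) {p : α} (hp : p ∈ S) :
    g p + ∑ᶠ u ∈ S \ {p}, g u = ∑ᶠ u ∈ S, g u := by
  rw [← finsum_mem_insert g (s := S \ {p}) (fun h => h.2 rfl) hS.sdiff,
    Set.insert_sdiff_singleton, Set.insert_eq_of_mem hp]

-- `w v + ∑ᶠ u ∈ S \ {v}, s u = ∑ᶠ u ∈ S, s u - (s v - w v)`, smallest where `s - w` is largest.
theorem isLeast_add_finsum_mem_sdiff_singleton {S : Set α} (hS : S.Finite) {w s : α → ℕ}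
    (hws : ∀ v ∈ S, w v ≤ s v) {p : α} (hp : p ∈ S)
    (hmax : ∀ v ∈ S, s v - w v ≤ s p - w p) :
    IsLeast ((fun v => w v + ∑ᶠ u ∈ S \ {v}, s u) '' S) (w p + ∑ᶠ u ∈ S \ {p}, s u) := by
  refine ⟨⟨p, hp, rfl⟩, ?_⟩
  rintro _ ⟨v, hv, rfl⟩
  have hsplit_v := add_finsum_mem_sdiff_singleton hS s hv
  have hsplit_p := add_finsum_mem_sdiff_singleton hS s hp
  have hsaving := hmax v hv
  have hwsv := hws v hv
  have hwsp := hws p hp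
  dsimp only
  omega

end Finsum

section TypePartition

variable {V : Type*} {G : SimpleGraph V}

theorem sameType.adj_of_adj_of_ne {p q r : V} (h : sameType G p q) (hpr : G.Adj p r)
    (hrq : r ≠ q) : G.Adj q r :=
  ((Set.ext_iff.mp h r).mpr ⟨hpr, hrq⟩).1

theorem isClique_typeClass_of_adj {u v : V}
    (h : Quotient.mk (typeSetoid G) u = Quotient.mk (typeSetoid G) v) (huv : G.Adj u v) :
    G.IsClique (typeClass G (Quotient.mk (typeSetoid G) u)) := by
  have adj_u : ∀ c ∈ typeClass G (Quotient.mk (typeSetoid G) u), c ≠ u → G.Adj c u :=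
    fun c hc hcu =>
      (Quotient.exact (hc.trans h).symm : sameType G v c).adj_of_adj_of_ne huv.symm hcu.symm
  intro a ha b hb hab
  rcases eq_or_ne a u with rfl | hau
  · exact (adj_u b hb (Ne.symm hab)).symm
  rcases eq_or_ne b u with rfl | hbu
  · exact adj_u a ha hau
  · exact (Quotient.exact ha.symm : sameType G u a).adj_of_adj_of_ne (adj_u b hb hbu).symm
      (Ne.symm hab)

theorem typeGraph_adj_of_adj {u v : V}
    (h : Quotient.mk (typeSetoid G) u ≠ Quotient.mk (typeSetoid G) v) (huv : G.Adj u v) :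
    (typeGraph G).Adj (Quotient.mk (typeSetoid G) u) (Quotient.mk (typeSetoid G) v) := by
  refine ⟨h, fun a b ha hb => ?_⟩
  have hub : G.Adj u b :=
    ((Quotient.exact hb.symm : sameType G v b).adj_of_adj_of_ne huv.symm
      (by rintro rfl; exact h hb)).symm
  exact (Quotient.exact ha.symm : sameType G u a).adj_of_adj_of_ne hub
    (by rintro rfl; exact h (ha.symm.trans hb))

end TypePartition

section Lift

variable {V : Type*} {H : SimpleGraph V} {C' : Set (Quotient (typeSetoid H))}
  {f : Quotient (typeSetoid H) → V}

def liftCover (H : SimpleGraph V) (C' : Set (Quotient (typeSetoid H)))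
    (f : Quotient (typeSetoid H) → V) : Set V :=
  {v | Quotient.mk (typeSetoid H) v ∈ C' ∨
    (H.IsClique (typeClass H (Quotient.mk (typeSetoid H) v)) ∧
      Quotient.mk (typeSetoid H) v ∉ C' ∧ v ≠ f (Quotient.mk (typeSetoid H) v))}

theorem mem_liftCover_iff {x : Quotient (typeSetoid H)} {v : V} (hv : v ∈ typeClass H x) :
    v ∈ liftCover H C' f ↔ x ∈ C' ∨ (H.IsClique (typeClass H x) ∧ x ∉ C' ∧ v ≠ f x) := by
  subst hv
  rfl

theorem isVertexCover_liftCover (hC' : IsVertexCover (typeGraph H) C') :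
    IsVertexCover H (liftCover H C' f) := by
  intro u v huv
  by_cases hsame : Quotient.mk (typeSetoid H) u = Quotient.mk (typeSetoid H) v
  · have hcl := isClique_typeClass_of_adj hsame huv
    have hv : v ∈ typeClass H (Quotient.mk (typeSetoid H) u) := hsame.symm
    rw [mem_liftCover_iff rfl, mem_liftCover_iff hv]
    by_cases hx : Quotient.mk (typeSetoid H) u ∈ C'
    · exact Or.inl (Or.inl hx)
    rcases eq_or_ne u (f (Quotient.mk (typeSetoid H) u)) with hu | hu
    · exact Or.inr (Or.inr ⟨hcl, hx, fun hvf => huv.ne (hu.trans hvf.symm)⟩)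
    · exact Or.inl (Or.inr ⟨hcl, hx, hu⟩)
  · exact (hC' (typeGraph_adj_of_adj hsame huv)).imp Or.inl Or.inl

variable (w s : V → ℕ) {x : Quotient (typeSetoid H)}

theorem finsum_typeClass_liftCover_of_mem (hx : x ∈ C') :
    ∑ᶠ v ∈ typeClass H x, (if v ∈ liftCover H C' f then s v else w v) =
      ∑ᶠ v ∈ typeClass H x, s v :=
  finsum_mem_congr rfl fun _ hv => if_pos ((mem_liftCover_iff hv).mpr (Or.inl hx))

theorem finsum_typeClass_liftCover_of_not_isClique (hx : x ∉ C')
    (hcl : ¬ H.IsClique (typeClass H x)) :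
    ∑ᶠ v ∈ typeClass H x, (if v ∈ liftCover H C' f then s v else w v) =
      ∑ᶠ v ∈ typeClass H x, w v :=
  finsum_mem_congr rfl fun _ hv => if_neg <| by
    rw [mem_liftCover_iff hv]
    tauto

theorem finsum_typeClass_liftCover_of_isClique [Finite V] (hx : x ∉ C')
    (hcl : H.IsClique (typeClass H x)) (hfx : f x ∈ typeClass H x) :
    ∑ᶠ v ∈ typeClass H x, (if v ∈ liftCover H C' f then s v else w v) =
      w (f x) + ∑ᶠ v ∈ typeClass H x \ {f x}, s v := by
  have hmem : ∀ v ∈ typeClass H x, v ∈ liftCover H C' f ↔ v ≠ f x := fun v hv => by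
    rw [mem_liftCover_iff hv]
    tauto
  rw [← add_finsum_mem_sdiff_singleton (Set.toFinite _) _ hfx, if_neg (by simp [hmem _ hfx])]
  exact congrArg _ (finsum_mem_congr rfl fun v hv => if_pos ((hmem v hv.1).mpr hv.2))

end Lift

/-- Lifting a vertex cover of the type graph to a vertex cover of `H` of equal cost. -/
theorem wvc_lift {V : Type} [Fintype V] (H : SimpleGraph V) (w s : V → ℕ)
    (hws : ∀ v, w v ≤ s v)
    (w' s' : Quotient (typeSetoid H) → ℕ)
    (hw'c : ∀ x, H.IsClique (typeClass H x) →
      w' x = sInf ((fun v => w v + ∑ᶠ u ∈ typeClass H x \ {v}, s u) '' typeClass H x))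
    (hw'i : ∀ x, ¬ H.IsClique (typeClass H x) → w' x = ∑ᶠ u ∈ typeClass H x, w u)
    (hs' : ∀ x, s' x = ∑ᶠ u ∈ typeClass H x, s u)
    (f : Quotient (typeSetoid H) → V)
    (hf1 : ∀ x, Quotient.mk (typeSetoid H) (f x) = x)
    (hf2 : ∀ x, ∀ u ∈ typeClass H x, s u - w u ≤ s (f x) - w (f x))
    (C' : Set (Quotient (typeSetoid H))) (hC' : IsVertexCover (typeGraph H) C')
    (C : Set V)
    (hC : C = {v | Quotient.mk (typeSetoid H) v ∈ C' ∨
      (H.IsClique (typeClass H (Quotient.mk (typeSetoid H) v)) ∧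
        Quotient.mk (typeSetoid H) v ∉ C' ∧ v ≠ f (Quotient.mk (typeSetoid H) v))}) :
    IsVertexCover H C ∧ vcCost w s C = vcCost w' s' C' := by
  change C = liftCover H C' f at hC
  subst hC
  refine ⟨isVertexCover_liftCover hC', ?_⟩
  rw [vcCost_eq_sum_ite, vcCost_eq_sum_ite,
    sum_eq_sum_finsum_mem_fiber (Quotient.mk (typeSetoid H))]
  refine Finset.sum_congr rfl fun x _ => ?_
  change ∑ᶠ v ∈ typeClass H x, _ = _
  by_cases hx : x ∈ C'
  · rw [if_pos hx, hs', finsum_typeClass_liftCover_of_mem w s hx]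
  by_cases hcl : H.IsClique (typeClass H x)
  · rw [if_neg hx, hw'c x hcl, finsum_typeClass_liftCover_of_isClique w s hx hcl (hf1 x),
      (isLeast_add_finsum_mem_sdiff_singleton (Set.toFinite _) (fun v _ => hws v) (hf1 x)
        (hf2 x)).csInf_eq]
  · rw [if_neg hx, hw'i x hcl, finsum_typeClass_liftCover_of_not_isClique w s hx hcl]
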